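/- The equation ρ²·w + τ = w on T = ℂ/ℤ[ζ], where ρ is a primitive cube root of unity and τ = (ρ−1)/3, has exactly three solutions, namely w ≡ ρᵏ/3 mod ℤ[ζ] for k ∈ {0,1,2}. -/
import Mathlib


/-- On `T = ℂ/ℤ[ζ]` with `ζ = e^{2πi/6}`, `ρ = ζ²`, and `τ = (ρ-1)/3`, the
equation `ρ²w + τ = w` has exactly the three solutions `w ≡ ρᵏ/3 mod ℤ[ζ]`
for `k ∈ {0,1,2}`. -/
theorem stmt_15 :
    ∀ ζ ρ τ : ℂ, ζ = Complex.exp (2 * Real.pi * Complex.I / 6) → ρ = ζ ^ 2 →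
      τ = (ρ - 1) / 3 →
      ∀ w : ℂ,
        ((∃ m n : ℤ, ρ ^ 2 * w + τ - w = (m : ℂ) + n * ζ) ↔
          ∃ k : Fin 3, ∃ m n : ℤ, w - ρ ^ (k : ℕ) / 3 = (m : ℂ) + n * ζ) := by
  intro ζ ρ τ hζ hρ hτ w
  have hz : ζ = 1/2 + (Real.sqrt 3 : ℂ) / 2 * Complex.I := by
    rw [hζ, show (2 * (Real.pi:ℂ) * Complex.I / 6) = ((Real.pi/3 : ℝ) : ℂ) * Complex.I by
      push_cast; ring, Complex.exp_mul_I, ← Complex.ofReal_cos, ← Complex.ofReal_sin,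
      Real.cos_pi_div_three, Real.sin_pi_div_three]
    push_cast; ring
  have h3 : ((Real.sqrt 3 : ℝ) : ℂ)^2 = 3 := by
    rw [← Complex.ofReal_pow, Real.sq_sqrt (by norm_num : (3:ℝ) ≥ 0)]
    norm_num
  have h2 : ζ ^ 2 = ζ - 1 := by
    rw [hz]
    linear_combination (Complex.I^2/4) * h3 + (3/4) * Complex.I_sq
  subst hρ hτ
  constructor
  · rintro ⟨m, n, h⟩
    have hw : w = (((m:ℂ) - n + 1) * ζ + (-2*m - n - 1))/3 := by
      linear_combination ((ζ-2)/3) * h +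
        (1/9 + (n:ℂ)/3 + w/3 - ζ/9 + 2*ζ*w/3 + ζ^2*w/3 - ζ^3*w/3) * h2
    obtain ⟨q, hq⟩ : ∃ q : ℤ, m - n + 1 = 3*q ∨ m - n + 1 = 3*q + 1 ∨ m - n + 1 = 3*q + 2 :=
      ⟨(m - n + 1) / 3, by omega⟩
    rcases hq with hq | hq | hq
    · refine ⟨0, -n - 2*q, q, ?_⟩
      have hqC : (m:ℂ) = n - 1 + 3*q := by exact_mod_cast (by omega : m = n - 1 + 3*q)
      push_cast [Fin.val_zero]
      linear_combination hw + ((ζ-2)/3) * hqC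
    · refine ⟨1, -n - 2*q, q, ?_⟩
      have hqC : (m:ℂ) = n + 3*q := by exact_mod_cast (by omega : m = n + 3*q)
      push_cast [Fin.val_one]
      linear_combination hw + ((ζ-2)/3) * hqC - (1/3) * h2
    · refine ⟨2, -n - 2*q - 1, q + 1, ?_⟩
      have hqC : (m:ℂ) = n + 1 + 3*q := by exact_mod_cast (by omega : m = n + 1 + 3*q)
      push_cast [Fin.val_two]
      linear_combination hw + ((ζ-2)/3) * hqC - ((ζ^2+ζ)/3) * h2
  · rintro ⟨k, m, n, h⟩
    fin_cases k
    · simp only [Fin.val_zero] at h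
      refine ⟨n - m - 1, -m - 2*n, ?_⟩
      push_cast
      linear_combination (ζ^4 - 1) * h +
        (1/3 - (n:ℂ) + ζ/3 + ζ*m + ζ^2/3 + ζ^2*n + ζ^2*m + ζ^3*n) * h2
    · simp only [Fin.val_one] at h
      refine ⟨n - m, -m - 2*n, ?_⟩
      push_cast
      linear_combination (ζ^4 - 1) * h +
        (-1/3 - (n:ℂ) - ζ/3 + ζ*m + ζ^2*n + ζ^2*m + ζ^3/3 + ζ^3*n + ζ^4/3) * h2
    · simp only [Fin.val_two] at h
      refine ⟨n - m - 1, -m - 2*n + 1, ?_⟩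
      push_cast
      linear_combination (ζ^4 - 1) * h +
        (2/3 - (n:ℂ) - ζ/3 + ζ*m - 2*ζ^2/3 + ζ^2*n + ζ^2*m - ζ^3/3 + ζ^3*n + ζ^5/3 + ζ^6/3) * h2
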